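/- The centralizer Z_1(n) of C[S_n] with respect to the subgroup S_{n-1} (permutations fixing n) is a commutative algebra. -/

import Mathlib

/-!
Every permutation `π` is conjugate to `π⁻¹` by a permutation fixing the last symbol: reflect each
cycle of `π` about a base point, the last symbol being the base point of its own cycle. Hence the
elements of `Z_1(n+1)`, and their products, are fixed by the linear extension `Inv` of
`π ↦ π⁻¹`. As `Inv` is an anti-automorphism, `g * h = Inv (g * h) = Inv h * Inv g = h * g`.
-/

open scoped Classical
open Finset

noncomputable section

namespace NC

/-- Conjugation of a group-algebra element by a permutation, extended linearly. -/
def conjA (n : ℕ) (σ : Equiv.Perm (Fin n)) (g : MonoidAlgebra ℂ (Equiv.Perm (Fin n))) :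
    MonoidAlgebra ℂ (Equiv.Perm (Fin n)) :=
  MonoidAlgebra.ofCoeff (Finsupp.mapDomain (fun π => σ * π * σ⁻¹) g.coeff)

/-- Cycle type of a permutation, including fixed points as parts equal to 1
(a partition of n, as a multiset). -/
def fullType {n : ℕ} (π : Equiv.Perm (Fin n)) : Multiset ℕ :=
  π.cycleType + Multiset.replicate (n - π.support.card) 1

/-- The length of the cycle of `π` containing `x`. -/
def cycLenAt {n : ℕ} (π : Equiv.Perm (Fin n)) (x : Fin n) : ℕ :=
  if π x = x then 1 else (π.cycleOf x).support.card

/-- The conjugacy class `C_λ` of permutations of `S_{n+1}` of cycle type `λ`. -/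
def Ccl (n : ℕ) (lam : Multiset ℕ) : Finset (Equiv.Perm (Fin (n + 1))) :=
  Finset.univ.filter fun π => fullType π = lam

/-- `C_{λ,i}`: permutations of cycle type `λ` having the largest symbol on a cycle of length `i`. -/
def Cset (n : ℕ) (lam : Multiset ℕ) (i : ℕ) : Finset (Equiv.Perm (Fin (n + 1))) :=
  (Ccl n lam).filter fun π => cycLenAt π (Fin.last n) = i

/-- The standard basis element `K_{λ,i}` of `Z_1(n+1)`. -/
def Kel (n : ℕ) (lam : Multiset ℕ) (i : ℕ) : MonoidAlgebra ℂ (Equiv.Perm (Fin (n + 1))) :=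
  ∑ π ∈ Cset n lam i, MonoidAlgebra.single π 1

/-- Membership in the centralizer `Z_1(n+1)` of the group algebra with respect to the
subgroup of permutations fixing the largest symbol. -/
def Z1mem (n : ℕ) (g : MonoidAlgebra ℂ (Equiv.Perm (Fin (n + 1)))) : Prop :=
  ∀ σ : Equiv.Perm (Fin (n + 1)), σ (Fin.last n) = Fin.last n → conjA (n + 1) σ g = g

/-- A filling `T : Fin m → Fin m × Fin m` (position of each entry, as (row, column))
is a standard Young tableau: it is injective and every initial segment of entries occupies a
lower set of cells (entries increase along rows and down columns). -/
def IsSYT (m : ℕ) (T : Fin m → Fin m × Fin m) : Prop :=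
  Function.Injective T ∧
    ∀ k : Fin m, ∀ c : Fin m × Fin m, c.1 ≤ (T k).1 → c.2 ≤ (T k).2 → ∃ j : Fin m, j ≤ k ∧ T j = c

/-- Length of row `r` of a filling. -/
def rowLen (m : ℕ) (T : Fin m → Fin m × Fin m) (r : ℕ) : ℕ :=
  (Finset.univ.filter fun k => ((T k).1 : ℕ) = r).card

/-- The shape of a filling, as the multiset of its (positive) row lengths. -/
def shapeOf (m : ℕ) (T : Fin m → Fin m × Fin m) : Multiset ℕ :=
  ((Multiset.range m).map fun r => rowLen m T r).filter (0 < ·)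

/-- The set of standard Young tableaux of shape `λ` with `m` cells. -/
def SYTall (m : ℕ) (lam : Multiset ℕ) : Finset (Fin m → Fin m × Fin m) :=
  Finset.univ.filter fun T => IsSYT m T ∧ shapeOf m T = lam

/-- `d_λ`, the number of standard Young tableaux of shape `λ`. -/
def dnum (m : ℕ) (lam : Multiset ℕ) : ℕ := (SYTall m lam).card

/-- `SYT_{λ,i}`: standard Young tableaux of shape `λ` in which the largest entry lies at the
end of a row of length `i`. -/
def SYTset (n : ℕ) (lam : Multiset ℕ) (i : ℕ) :
    Finset (Fin (n + 1) → Fin (n + 1) × Fin (n + 1)) :=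
  (SYTall (n + 1) lam).filter fun T => rowLen (n + 1) T ((T (Fin.last n)).1 : ℕ) = i

/-- The content (column minus row) of the entry `k` in the tableau `T`. -/
def ct (m : ℕ) (T : Fin m → Fin m × Fin m) (k : Fin m) : ℤ :=
  ((T k).2 : ℤ) - ((T k).1 : ℤ)

/-- The Jucys–Murphy element `J_{x+1} = Σ_{y<x} (y, x)` of `ℂ[S_m]`. -/
def JM (m : ℕ) (x : Fin m) : MonoidAlgebra ℂ (Equiv.Perm (Fin m)) :=
  ∑ y ∈ Finset.univ.filter (fun y : Fin m => y < x), MonoidAlgebra.single (Equiv.swap y x) 1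

/-- Young's seminormal unit `e_T`: the Gelfand–Tsetlin idempotent attached to `T`, realized by
Murphy's interpolation formula as a product of spectral projections of the Jucys–Murphy
elements onto the content eigenvalues of `T`. -/
def eTg (m : ℕ) (T : Fin m → Fin m × Fin m) : MonoidAlgebra ℂ (Equiv.Perm (Fin m)) :=
  ((List.finRange m).map fun (x : Fin m) =>
    (((((Finset.Icc (-((x : ℕ) : ℤ)) ((x : ℕ) : ℤ)).erase (ct m T x)).sort (· ≤ ·)).map fun c =>
      (((ct m T x - c : ℤ) : ℂ))⁻¹ •
        (JM m x - ((c : ℤ) : ℂ) • (1 : MonoidAlgebra ℂ (Equiv.Perm (Fin m))))).prod)).prod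

/-- The central element `X^λ = Σ_{T ∈ SYT_λ} e_T` of `ℂ[S_m]` (the central orthogonal
idempotent indexed by `λ`). -/
def Xg (m : ℕ) (lam : Multiset ℕ) : MonoidAlgebra ℂ (Equiv.Perm (Fin m)) :=
  ∑ T ∈ SYTall m lam, eTg m T

/-- The `Z_1`-idempotent `Γ^{λ,i} = Σ_{T ∈ SYT_{λ,i}} e_T`. -/
def Gam (n : ℕ) (lam : Multiset ℕ) (i : ℕ) : MonoidAlgebra ℂ (Equiv.Perm (Fin (n + 1))) :=
  ∑ T ∈ SYTset n lam i, eTg (n + 1) T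

/-- `i_-(λ)`: the partition obtained from `λ` by replacing one part `i` by `i - 1`. -/
def iminus (lam : Multiset ℕ) (i : ℕ) : Multiset ℕ :=
  ((i - 1) ::ₘ lam.erase i).filter (0 < ·)

/-- `c_{λ,i} = i - Σ_{k ≥ i} m_k(λ)`: the content of the cell containing the largest entry in
any tableau of shape `λ` with that entry at the end of a row of length `i`. -/
def cCorner (lam : Multiset ℕ) (i : ℕ) : ℤ :=
  (i : ℤ) - ((lam.filter fun k => i ≤ k).card : ℤ)

/-- The multiset of contents of the cells of the Ferrers diagram of `λ`. -/
def contentsM (lam : Multiset ℕ) : Multiset ℤ :=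
  ↑((((lam.sort (· ≤ ·)).reverse.zipIdx).map fun p =>
      (List.range p.1).map fun c => (c : ℤ) - (p.2 : ℤ)).flatten)

/-- The generalized character `γ^{μ,j}_{λ,i} = (n!/d_μ) [K_{λ,i}] Γ^{μ,j}`, the (normalized)
coefficient of the standard basis element `K_{λ,i}` in `Γ^{μ,j}` (computed as the average of the
coefficients of `Γ^{μ,j}` over the class `C_{λ,i}`). -/
def gam (n : ℕ) (mu : Multiset ℕ) (j : ℕ) (lam : Multiset ℕ) (i : ℕ) : ℂ :=
  ((Nat.factorial (n + 1) : ℂ) / (dnum (n + 1) mu : ℂ)) *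
    ((∑ π ∈ Cset n lam i, (Gam n mu j).coeff π) / ((Cset n lam i).card : ℂ))

/-- The irreducible character `χ^μ` evaluated at `π`: `(n!/d_μ)` times the coefficient of `π`
in the central idempotent `X^μ`. -/
def chi (n : ℕ) (mu : Multiset ℕ) (π : Equiv.Perm (Fin (n + 1))) : ℂ :=
  ((Nat.factorial (n + 1) : ℂ) / (dnum (n + 1) mu : ℂ)) * (Xg (n + 1) mu).coeff π

/-- The embedding of a permutation of `Fin n` into `S_{n+1}` fixing the last symbol. -/
def extPerm (n : ℕ) (π : Equiv.Perm (Fin n)) : Equiv.Perm (Fin (n + 1)) :=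
  π.viaFintypeEmbedding (Fin.castSuccEmb : Fin n ↪ Fin (n + 1))

/-- The induced embedding of group algebras `ℂ[S_n] → ℂ[S_{n+1}]`. -/
def embA (n : ℕ) (g : MonoidAlgebra ℂ (Equiv.Perm (Fin n))) :
    MonoidAlgebra ℂ (Equiv.Perm (Fin (n + 1))) :=
  MonoidAlgebra.ofCoeff (Finsupp.mapDomain (extPerm n) g.coeff)

end NC

namespace Equiv.Perm

variable {α : Type*} (π : Perm α)

theorem zpow_neg_apply_eq_of_zpow_apply_eq {i k : ℤ} {c : α} (h : (π ^ i) c = (π ^ k) c) :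
    (π ^ (-i)) c = (π ^ (-k)) c := by
  have h' := congrArg (π ^ (-i - k)) h
  simp only [← mul_apply, ← zpow_add] at h'
  convert h'.symm using 3 <;> ring

section Reflection

variable (a : α)

def cycleBase (x : α) : α :=
  if π.SameCycle a x then a else (Quotient.mk (SameCycle.setoid π) x).out

theorem sameCycle_cycleBase (x : α) : π.SameCycle (π.cycleBase a x) x := by
  unfold cycleBase
  split_ifs with hx
  · exact hx
  · exact Quotient.mk_out (s := SameCycle.setoid π) x

theorem cycleBase_eq_of_sameCycle {x y : α} (hxy : π.SameCycle x y) :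
    π.cycleBase a x = π.cycleBase a y := by
  have hq : Quotient.mk (SameCycle.setoid π) x = Quotient.mk (SameCycle.setoid π) y :=
    Quotient.sound hxy
  have hax : π.SameCycle a x ↔ π.SameCycle a y := ⟨fun h => h.trans hxy, fun h => h.trans hxy.symm⟩
  simp only [cycleBase, hax, hq]

theorem cycleBase_self : π.cycleBase a a = a :=
  if_pos (SameCycle.refl π a)

/-- Reflection of each cycle of `π` about its base point: `π ^ k` of the base point is sent to
`π ^ (-k)` of it. -/
def reflect (x : α) : α :=
  (π ^ (-(π.sameCycle_cycleBase a x).choose)) (π.cycleBase a x)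

theorem reflect_eq {x : α} {k : ℤ} (hk : (π ^ k) (π.cycleBase a x) = x) :
    π.reflect a x = (π ^ (-k)) (π.cycleBase a x) :=
  π.zpow_neg_apply_eq_of_zpow_apply_eq
    (((π.sameCycle_cycleBase a x).choose_spec).trans hk.symm)

theorem reflect_self : π.reflect a a = a := by
  have h := π.reflect_eq a (x := a) (k := 0) (by rw [zpow_zero, one_apply, cycleBase_self])
  rwa [neg_zero, zpow_zero, one_apply, cycleBase_self] at h

theorem reflect_apply (x : α) : π.reflect a (π x) = π⁻¹ (π.reflect a x) := by
  obtain ⟨k, hk⟩ := π.sameCycle_cycleBase a x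
  have hbase : π.cycleBase a (π x) = π.cycleBase a x :=
    π.cycleBase_eq_of_sameCycle a (sameCycle_apply_left.mpr (SameCycle.refl π x))
  rw [π.reflect_eq a hk, π.reflect_eq a (k := 1 + k) (by rw [hbase, zpow_one_add, mul_apply, hk]),
    hbase, neg_add, zpow_add, mul_apply, zpow_neg_one]

theorem reflect_involutive : Function.Involutive (π.reflect a) := by
  intro x
  obtain ⟨k, hk⟩ := π.sameCycle_cycleBase a x
  have hrefl : π.reflect a x = (π ^ (-k)) (π.cycleBase a x) := π.reflect_eq a hk
  have hbase : π.cycleBase a (π.reflect a x) = π.cycleBase a x :=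
    π.cycleBase_eq_of_sameCycle a <| SameCycle.trans
      ⟨k, by rw [hrefl, ← mul_apply, ← zpow_add, add_neg_cancel, zpow_zero, one_apply]⟩
      (π.sameCycle_cycleBase a x)
  rw [π.reflect_eq a (k := -k) (by rw [hbase, hrefl]), hbase, neg_neg, hk]

end Reflection

theorem exists_conj_eq_inv_fixing (a : α) :
    ∃ τ : Perm α, τ a = a ∧ τ * π * τ⁻¹ = π⁻¹ := by
  refine ⟨(π.reflect_involutive a).toPerm, π.reflect_self a, ?_⟩
  rw [mul_inv_eq_iff_eq_mul]
  ext x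
  exact π.reflect_apply a x

end Equiv.Perm

namespace MonoidAlgebra

variable {R G : Type*} [CommSemiring R] [Group G]

theorem coeff_mapDomain_inv (x : R[G]) (g : G) :
    (mapDomain (·⁻¹) x).coeff g = x.coeff g⁻¹ := by
  simpa using Finsupp.mapDomain_apply inv_injective x.coeff g⁻¹

theorem mapDomain_inv_mul (x y : R[G]) :
    mapDomain (·⁻¹) (x * y) = mapDomain (·⁻¹) y * mapDomain (·⁻¹) x := by
  have mapDomain_smul (r : R) (z : R[G]) : mapDomain (·⁻¹) (r • z) = r • mapDomain (·⁻¹) z := by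
    ext; simp
  induction x using MonoidAlgebra.induction_on with
  | of g =>
    induction y using MonoidAlgebra.induction_on with
    | of h => simp [of_apply, single_mul_single]
    | add y₁ y₂ h₁ h₂ => simp only [mul_add, add_mul, mapDomain_add, h₁, h₂]
    | smul r y h => simp only [mul_smul_comm, smul_mul_assoc, mapDomain_smul, h]
  | add x₁ x₂ h₁ h₂ => simp only [add_mul, mul_add, mapDomain_add, h₁, h₂]
  | smul r x h => simp only [smul_mul_assoc, mul_smul_comm, mapDomain_smul, h]

theorem mul_comm_of_mapDomain_inv_eq {x y : R[G]} (hx : mapDomain (·⁻¹) x = x)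
    (hy : mapDomain (·⁻¹) y = y) (hxy : mapDomain (·⁻¹) (x * y) = x * y) : x * y = y * x := by
  rw [← hxy, mapDomain_inv_mul, hx, hy]

end MonoidAlgebra

namespace NC

open MonoidAlgebra

theorem conjA_mul (m : ℕ) (σ : Equiv.Perm (Fin m)) (g h : MonoidAlgebra ℂ (Equiv.Perm (Fin m))) :
    conjA m σ (g * h) = conjA m σ g * conjA m σ h :=
  mapDomain_mul (MulAut.conj σ) g h

theorem coeff_conjA_conj (m : ℕ) (σ π : Equiv.Perm (Fin m))
    (g : MonoidAlgebra ℂ (Equiv.Perm (Fin m))) :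
    (conjA m σ g).coeff (σ * π * σ⁻¹) = g.coeff π :=
  Finsupp.mapDomain_apply (MulAut.conj σ).injective g.coeff π

theorem Z1mem.mul {n : ℕ} {g h : MonoidAlgebra ℂ (Equiv.Perm (Fin (n + 1)))}
    (hg : Z1mem n g) (hh : Z1mem n h) : Z1mem n (g * h) := fun σ hσ => by
  rw [conjA_mul, hg σ hσ, hh σ hσ]

theorem Z1mem.mapDomain_inv_eq {n : ℕ} {g : MonoidAlgebra ℂ (Equiv.Perm (Fin (n + 1)))}
    (hg : Z1mem n g) : mapDomain (·⁻¹) g = g := by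
  ext π
  obtain ⟨τ, hτ, hτπ⟩ := π.exists_conj_eq_inv_fixing (Fin.last n)
  rw [coeff_mapDomain_inv, ← hτπ]
  simpa only [hg τ hτ] using coeff_conjA_conj (n + 1) τ π g

/-- the centralizer `Z_1(n+1)` of `ℂ[S_{n+1}]` with respect to the subgroup of
permutations fixing the largest symbol is commutative. -/
theorem stmt1 (n : ℕ) (g h : MonoidAlgebra ℂ (Equiv.Perm (Fin (n + 1))))
    (hg : Z1mem n g) (hh : Z1mem n h) : g * h = h * g :=
  mul_comm_of_mapDomain_inv_eq hg.mapDomain_inv_eq hh.mapDomain_inv_eq (hg.mul hh).mapDomain_inv_eq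

end NC
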